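/- arXiv:2303.11874 — 5 statements merged into one kernel-verified Lean document; each statement's English description precedes it below -/
import Mathlib

section
/- For 1 < γ ≤ 2 and positive reals ρ̄, ρ, the relative entropy H(ρ̄|ρ) := (1/(γ-1))(ρ̄^γ - ρ^γ + γ(ρ - ρ̄)ρ^{γ-1}) satisfies H(ρ̄|ρ) ≥ (γ/2)·min(ρ̄^{γ-2}, ρ^{γ-2})·(ρ̄ - ρ)². -/
open Real

/-!
Since `γ ≤ 2`, the second derivative `γ (γ - 1) x ^ (γ - 2)` of `x ↦ x ^ γ` is decreasing, so on
`(0, d]` with `d = max ρ̄ ρ` this function is strongly convex with modulus `γ (γ - 1) d ^ (γ - 2)`.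
Strong convexity bounds the Bregman divergence `(γ - 1) H(ρ̄|ρ)` from below by half the modulus
times `(ρ̄ - ρ)²`, and `d ^ (γ - 2) = min (ρ̄ ^ (γ - 2)) (ρ ^ (γ - 2))`.
-/

theorem ConvexOn.add_mul_sub_le_of_hasDerivAt {S : Set ℝ} {f : ℝ → ℝ} {x y f' : ℝ}
    (hf : ConvexOn ℝ S f) (hx : x ∈ S) (hy : y ∈ S) (hf' : HasDerivAt f f' x) :
    f x + f' * (y - x) ≤ f y := by
  rcases lt_trichotomy x y with hxy | rfl | hyx
  · have hslope := hf.le_slope_of_hasDerivAt hx hy hxy hf'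
    rw [slope_def_field, le_div_iff₀ (sub_pos.mpr hxy)] at hslope
    linarith
  · simp
  · have hslope := hf.slope_le_of_hasDerivAt hy hx hyx hf'
    rw [slope_def_field, div_le_iff₀ (sub_pos.mpr hyx)] at hslope
    linarith

theorem StrongConvexOn.mul_sq_le_sub_sub_of_hasDerivAt {S : Set ℝ} {f : ℝ → ℝ} {m x y f' : ℝ}
    (hf : StrongConvexOn S m f) (hx : x ∈ S) (hy : y ∈ S) (hf' : HasDerivAt f f' x) :
    m / 2 * (y - x) ^ 2 ≤ f y - f x - f' * (y - x) := by
  simp only [strongConvexOn_iff_convex, Real.norm_eq_abs, sq_abs] at hf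
  have hg' : HasDerivAt (fun z ↦ f z - m / 2 * z ^ 2) (f' - m * x) x :=
    (hf'.sub ((hasDerivAt_pow 2 x).const_mul (m / 2))).congr_deriv (by ring)
  linear_combination hf.add_mul_sub_le_of_hasDerivAt hx hy hg'

theorem strongConvexOn_of_hasDerivWithinAt2_ge {D : Set ℝ} (hD : Convex ℝ D) {f f' f'' : ℝ → ℝ}
    {m : ℝ} (hf : ContinuousOn f D)
    (hf' : ∀ x ∈ interior D, HasDerivWithinAt f (f' x) (interior D) x)
    (hf'' : ∀ x ∈ interior D, HasDerivWithinAt f' (f'' x) (interior D) x)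
    (hm : ∀ x ∈ interior D, m ≤ f'' x) : StrongConvexOn D m f := by
  simp only [strongConvexOn_iff_convex, Real.norm_eq_abs, sq_abs]
  refine convexOn_of_hasDerivWithinAt2_nonneg hD (f' := fun x ↦ f' x - m * x)
    (f'' := fun x ↦ f'' x - m) (hf.sub (by fun_prop)) (fun x hx ↦ ?_) (fun x hx ↦ ?_)
    (fun x hx ↦ sub_nonneg.mpr (hm x hx))
  · exact ((hf' x hx).sub ((hasDerivAt_pow 2 x).const_mul (m / 2)).hasDerivWithinAt).congr_deriv
      (by ring)
  · exact ((hf'' x hx).sub ((hasDerivAt_id x).const_mul m).hasDerivWithinAt).congr_deriv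
      (by ring)

theorem strongConvexOn_rpow_Ioc {p : ℝ} (d : ℝ) (hp₁ : 1 ≤ p) (hp₂ : p ≤ 2) :
    StrongConvexOn (Set.Ioc 0 d) (p * (p - 1) * d ^ (p - 2)) (fun x : ℝ ↦ x ^ p) := by
  refine strongConvexOn_of_hasDerivWithinAt2_ge (convex_Ioc 0 d)
    (f' := fun x ↦ p * x ^ (p - 1)) (f'' := fun x ↦ p * (p - 1) * x ^ (p - 2))
    (continuous_rpow_const (by linarith)).continuousOn (fun x hx ↦ ?_) (fun x hx ↦ ?_)
    (fun x hx ↦ ?_) <;> rw [interior_Ioc] at hx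
  · exact (hasDerivAt_rpow_const (Or.inl hx.1.ne')).hasDerivWithinAt
  · exact (((hasDerivAt_rpow_const (Or.inl hx.1.ne')).const_mul p).congr_deriv
      (by ring_nf)).hasDerivWithinAt
  · have hpow : d ^ (p - 2) ≤ x ^ (p - 2) := rpow_le_rpow_of_nonpos hx.1 hx.2.le (by linarith)
    have hcoeff : 0 ≤ p * (p - 1) := by nlinarith
    gcongr

/-- For `1 < γ ≤ 2` and `ρ̄, ρ > 0`, the relative entropy
`H(ρ̄|ρ) = (1/(γ-1))(ρ̄^γ - ρ^γ + γ(ρ - ρ̄)ρ^(γ-1))` satisfies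
`H(ρ̄|ρ) ≥ (γ/2) min(ρ̄^(γ-2), ρ^(γ-2)) (ρ̄ - ρ)²`. -/
theorem relative_entropy_lower_bound_gamma_le_two (γ ρb ρ : ℝ)
    (hγ1 : 1 < γ) (hγ2 : γ ≤ 2) (hρb : 0 < ρb) (hρ : 0 < ρ) :
    (γ/2) * min (ρb ^ (γ-2)) (ρ ^ (γ-2)) * (ρb - ρ)^2 ≤
      (1/(γ-1)) * (ρb ^ γ - ρ ^ γ + γ*(ρ - ρb)*ρ ^ (γ-1)) := by
  set d := max ρb ρ with hd
  have hbregman := (strongConvexOn_rpow_Ioc d hγ1.le hγ2).mul_sq_le_sub_sub_of_hasDerivAt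
    ⟨hρ, le_max_right ρb ρ⟩ ⟨hρb, le_max_left ρb ρ⟩ (hasDerivAt_rpow_const (Or.inl hρ.ne'))
  have hmin : min (ρb ^ (γ - 2)) (ρ ^ (γ - 2)) ≤ d ^ (γ - 2) := by
    rcases max_choice ρb ρ with h | h <;> rw [hd, h]
    exacts [min_le_left _ _, min_le_right _ _]
  have hγ : 0 < γ - 1 := by linarith
  calc (γ/2) * min (ρb ^ (γ-2)) (ρ ^ (γ-2)) * (ρb - ρ)^2
      ≤ (γ/2) * d ^ (γ - 2) * (ρb - ρ) ^ 2 := by gcongr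
    _ = (1 / (γ - 1)) * (γ * (γ - 1) * d ^ (γ - 2) / 2 * (ρb - ρ) ^ 2) := by field_simp
    _ ≤ (1 / (γ - 1)) * (ρb ^ γ - ρ ^ γ - γ * ρ ^ (γ - 1) * (ρb - ρ)) := by gcongr
    _ = (1/(γ-1)) * (ρb ^ γ - ρ ^ γ + γ*(ρ - ρb)*ρ ^ (γ-1)) := by ring
end

section
/- Let Ω be a measure space, 1 < γ ≤ 2, and let ρ̄, ρ : Ω → (0,∞) be measurable with ∫ρ̄ = ∫ρ = 1. Then there exists a constant C > 0 depending only on γ such that the L^{2/(3-γ)} norm of ρ̄ - ρ squared is bounded by C times ∫ H(ρ̄|ρ), where H(ρ̄|ρ) = (1/(γ-1))(ρ̄^γ - ρ^γ + γ(ρ-ρ̄)ρ^{γ-1}). -/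
/-!
Taylor's theorem with Lagrange remainder for `t ↦ t ^ γ` writes `(γ - 1) H(ρ̄|ρ)` as
`γ (γ - 1) / 2 · ξ ^ (γ - 2) (ρ̄ - ρ)²` for some `ξ` between `ρ̄` and `ρ`; since `γ ≤ 2`, this gives
`H(ρ̄|ρ) ≥ γ / 2 · max(ρ̄, ρ) ^ (γ - 2) (ρ̄ - ρ)²`. Writing `|ρ̄ - ρ| ^ (2 / (3 - γ))` as
`(max(ρ̄, ρ) ^ (γ - 2) (ρ̄ - ρ)²) ^ (1 / (3 - γ)) · max(ρ̄, ρ) ^ ((2 - γ) / (3 - γ))`, Hölder's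
inequality and `∫ max(ρ̄, ρ) ≤ ∫ ρ̄ + ∫ ρ = 2` give the theorem with `C = 2 ^ (3 - γ) / γ`.
-/

open MeasureTheory Real Set
open scoped ENNReal

/-- `relEntropy γ ρ̄ ρ` is the paper's `H(ρ̄|ρ)`. -/
noncomputable def relEntropy (γ a b : ℝ) : ℝ :=
  (1 / (γ - 1)) * (a ^ γ - b ^ γ + γ * (b - a) * b ^ (γ - 1))

theorem exists_rpow_sub_rpow_sub_mul_eq (γ : ℝ) {a b : ℝ} (ha : 0 < a) (hb : 0 < b) :
    ∃ ξ ∈ uIcc b a, a ^ γ - b ^ γ - γ * b ^ (γ - 1) * (a - b) =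
      γ * (γ - 1) / 2 * ξ ^ (γ - 2) * (a - b) ^ 2 := by
  rcases eq_or_ne b a with rfl | hba
  · exact ⟨b, left_mem_uIcc, by ring⟩
  have hpos : ∀ t ∈ uIcc b a, 0 < t := fun t ht => (lt_min hb ha).trans_le ht.1
  have hdiff : ContDiffOn ℝ (1 + 1) (fun t : ℝ => t ^ γ) (uIcc b a) := fun t ht =>
    (contDiffAt_rpow_const_of_ne (hpos t ht).ne').contDiffWithinAt
  obtain ⟨ξ, hξ, h⟩ := taylor_mean_remainder_lagrange_iteratedDeriv hba hdiff
  refine ⟨ξ, Ioo_subset_Icc_self hξ, ?_⟩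
  have hderiv : derivWithin (fun t : ℝ => t ^ γ) (uIcc b a) b = γ * b ^ (γ - 1) :=
    (hasDerivAt_rpow_const (Or.inl hb.ne')).hasDerivWithinAt.derivWithin
      (uniqueDiffOn_uIcc hba b left_mem_uIcc)
  have htaylor : taylorWithinEval (fun t : ℝ => t ^ γ) 1 (uIcc b a) b a =
      b ^ γ + γ * b ^ (γ - 1) * (a - b) := by
    simp only [taylorWithinEval_succ, taylor_within_zero_eval, zero_add, iteratedDerivWithin_one,
      hderiv, smul_eq_mul]
    ring
  rw [htaylor, iteratedDeriv_eq_iterate, iter_deriv_rpow_const] at h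
  norm_num [descPochhammer_succ_right] at h
  linear_combination h

theorem mul_max_rpow_mul_sq_le_relEntropy {γ : ℝ} (hγ1 : 1 < γ) (hγ2 : γ ≤ 2) {a b : ℝ}
    (ha : 0 < a) (hb : 0 < b) :
    γ / 2 * max a b ^ (γ - 2) * (a - b) ^ 2 ≤ relEntropy γ a b := by
  obtain ⟨ξ, hξ, hTaylor⟩ := exists_rpow_sub_rpow_sub_mul_eq γ ha hb
  have hξ_pos : 0 < ξ := (lt_min hb ha).trans_le hξ.1
  have hξ_le : ξ ≤ max a b := hξ.2.trans (max_comm b a).le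
  have hmono : max a b ^ (γ - 2) ≤ ξ ^ (γ - 2) :=
    rpow_le_rpow_of_nonpos hξ_pos hξ_le (by linarith)
  have hH : relEntropy γ a b = γ / 2 * ξ ^ (γ - 2) * (a - b) ^ 2 := by
    have hγ1' : γ - 1 ≠ 0 := by linarith
    rw [relEntropy, show a ^ γ - b ^ γ + γ * (b - a) * b ^ (γ - 1) =
      a ^ γ - b ^ γ - γ * b ^ (γ - 1) * (a - b) by ring, hTaylor]
    field_simp
  rw [hH]
  gcongr

variable {α : Type*} [MeasurableSpace α] {μ : Measure α}

theorem enorm_rpow_two_div_eq_rpow_mul_rpow {s : ℝ} (hs : 0 < s) {m y : ℝ} (hm : 0 < m) :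
    ‖y‖ₑ ^ (2 / s) =
      ENNReal.ofReal (m ^ (1 - s) * y ^ 2) ^ (1 / s) * ENNReal.ofReal m ^ ((s - 1) / s) := by
  rw [Real.enorm_eq_ofReal_abs, ← sq_abs,
    ENNReal.ofReal_mul (by positivity), ENNReal.ofReal_pow (abs_nonneg y),
    ← ENNReal.ofReal_rpow_of_pos hm,
    ENNReal.mul_rpow_of_nonneg _ _ (by positivity), ← ENNReal.rpow_mul, ← ENNReal.rpow_natCast,
    ← ENNReal.rpow_mul, mul_right_comm,
    ← ENNReal.rpow_add _ _ (by simpa using hm) ENNReal.ofReal_ne_top]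
  field_simp
  simp

theorem eLpNorm_sq_le_lintegral_mul_lintegral_rpow {s : ℝ} (hs : 1 ≤ s) {f M : α → ℝ}
    (hf : AEMeasurable f μ) (hM : AEMeasurable M μ) (hMpos : ∀ x, 0 < M x) :
    eLpNorm f (ENNReal.ofReal (2 / s)) μ ^ 2 ≤
      (∫⁻ x, ENNReal.ofReal (M x ^ (1 - s) * f x ^ 2) ∂μ) *
        (∫⁻ x, ENNReal.ofReal (M x) ∂μ) ^ (s - 1) := by
  have hs0 : 0 < s := by linarith
  have hholder : ∫⁻ x, ‖f x‖ₑ ^ (2 / s) ∂μ ≤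
      (∫⁻ x, ENNReal.ofReal (M x ^ (1 - s) * f x ^ 2) ∂μ) ^ (1 / s) *
        (∫⁻ x, ENNReal.ofReal (M x) ∂μ) ^ ((s - 1) / s) := by
    have hsplit (x : α) := enorm_rpow_two_div_eq_rpow_mul_rpow (y := f x) hs0 (hMpos x)
    simp_rw [hsplit]
    exact ENNReal.lintegral_mul_norm_pow_le
      ((hM.pow_const _).mul (hf.pow_const 2)).ennreal_ofReal hM.ennreal_ofReal
      (by positivity) (div_nonneg (by linarith) hs0.le) (by field_simp; ring)
  rw [eLpNorm_eq_lintegral_rpow_enorm_toReal (by simpa using hs0) ENNReal.ofReal_ne_top,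
    ENNReal.toReal_ofReal (by positivity), ← ENNReal.rpow_natCast, ← ENNReal.rpow_mul]
  calc _ ≤ ((∫⁻ x, ENNReal.ofReal (M x ^ (1 - s) * f x ^ 2) ∂μ) ^ (1 / s) *
        (∫⁻ x, ENNReal.ofReal (M x) ∂μ) ^ ((s - 1) / s)) ^ s := by
        convert ENNReal.rpow_le_rpow hholder hs0.le using 2
        push_cast
        field_simp
    _ = _ := by
        rw [ENNReal.mul_rpow_of_nonneg _ _ hs0.le, ← ENNReal.rpow_mul, ← ENNReal.rpow_mul]
        field_simp
        simp

theorem lintegral_ofReal_max_le_integral_add {f g : α → ℝ} (hf : Integrable f μ)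
    (hg : Integrable g μ) (hf0 : ∀ x, 0 ≤ f x) (hg0 : ∀ x, 0 ≤ g x) :
    ∫⁻ x, ENNReal.ofReal (max (f x) (g x)) ∂μ ≤ ENNReal.ofReal (∫ x, f x ∂μ + ∫ x, g x ∂μ) := by
  rw [← integral_add hf hg, ofReal_integral_eq_lintegral_ofReal (f := fun x => f x + g x)
    (hf.add hg) (Filter.Eventually.of_forall fun x => add_nonneg (hf0 x) (hg0 x))]
  exact lintegral_mono fun x => ENNReal.ofReal_le_ofReal (max_le_add_of_nonneg (hf0 x) (hg0 x))

theorem lintegral_max_rpow_mul_sq_le_lintegral_relEntropy {γ : ℝ} (hγ1 : 1 < γ) (hγ2 : γ ≤ 2)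
    {f g : α → ℝ} (hf : ∀ x, 0 < f x) (hg : ∀ x, 0 < g x) :
    ∫⁻ x, ENNReal.ofReal (max (f x) (g x) ^ (γ - 2) * (f x - g x) ^ 2) ∂μ ≤
      ENNReal.ofReal (2 / γ) * ∫⁻ x, ENNReal.ofReal (relEntropy γ (f x) (g x)) ∂μ := by
  have hγ : 0 < γ := by linarith
  rw [← lintegral_const_mul' _ _ ENNReal.ofReal_ne_top]
  refine lintegral_mono fun x => ?_
  rw [← ENNReal.ofReal_mul (by positivity)]
  refine ENNReal.ofReal_le_ofReal ?_
  calc max (f x) (g x) ^ (γ - 2) * (f x - g x) ^ 2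
      = 2 / γ * (γ / 2 * max (f x) (g x) ^ (γ - 2) * (f x - g x) ^ 2) := by field_simp
    _ ≤ 2 / γ * relEntropy γ (f x) (g x) := by
      gcongr
      exact mul_max_rpow_mul_sq_le_relEntropy hγ1 hγ2 (hf x) (hg x)

/-- For `1 < γ ≤ 2` there is a constant `C > 0` depending only on `γ` such that for any
measure space `Ω` and positive measurable densities `ρ̄, ρ` of total mass one,
`‖ρ̄ - ρ‖_{L^{2/(3-γ)}}² ≤ C ∫ H(ρ̄|ρ)`, where
`H(ρ̄|ρ) = (1/(γ-1))(ρ̄^γ - ρ^γ + γ(ρ - ρ̄)ρ^(γ-1))`. -/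
theorem lpNorm_sq_le_relative_entropy (γ : ℝ) (hγ1 : 1 < γ) (hγ2 : γ ≤ 2) :
    ∃ C > 0, ∀ (Ω : Type) (_ : MeasurableSpace Ω) (μ : Measure Ω) (ρb ρ : Ω → ℝ),
      Measurable ρb → Measurable ρ → (∀ x, 0 < ρb x) → (∀ x, 0 < ρ x) →
      Integrable ρb μ → Integrable ρ μ →
      (∫ x, ρb x ∂μ) = 1 → (∫ x, ρ x ∂μ) = 1 →
      (eLpNorm (fun x => ρb x - ρ x) (ENNReal.ofReal (2/(3-γ))) μ) ^ (2:ℕ) ≤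
        ENNReal.ofReal C *
          ∫⁻ x, ENNReal.ofReal
            ((1/(γ-1)) * (ρb x ^ γ - ρ x ^ γ + γ*(ρ x - ρb x)*ρ x ^ (γ-1))) ∂μ := by
  refine ⟨2 ^ (3 - γ) / γ, by positivity, ?_⟩
  intro Ω _ μ ρb ρ hρb_meas hρ_meas hρb_pos hρ_pos hρb_int hρ_int hρb_mass hρ_mass
  have hHolder := eLpNorm_sq_le_lintegral_mul_lintegral_rpow (μ := μ) (s := 3 - γ)
    (f := fun x => ρb x - ρ x) (by linarith) (hρb_meas.sub hρ_meas).aemeasurable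
    (hρb_meas.max hρ_meas).aemeasurable (fun x => lt_max_of_lt_left (hρb_pos x))
  have hMass := lintegral_ofReal_max_le_integral_add hρb_int hρ_int
    (fun x => (hρb_pos x).le) (fun x => (hρ_pos x).le)
  rw [hρb_mass, hρ_mass, one_add_one_eq_two] at hMass
  rw [show 1 - (3 - γ) = γ - 2 by ring, show 3 - γ - 1 = 2 - γ by ring] at hHolder
  calc _ ≤ _ := hHolder
    _ ≤ ENNReal.ofReal (2 / γ) * (∫⁻ x, ENNReal.ofReal (relEntropy γ (ρb x) (ρ x)) ∂μ) *
          ENNReal.ofReal 2 ^ (2 - γ) :=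
      mul_le_mul' (lintegral_max_rpow_mul_sq_le_lintegral_relEntropy hγ1 hγ2 hρb_pos hρ_pos)
        (ENNReal.rpow_le_rpow hMass (by linarith))
    _ = ENNReal.ofReal (2 ^ (3 - γ) / γ) *
          ∫⁻ x, ENNReal.ofReal (relEntropy γ (ρb x) (ρ x)) ∂μ := by
      have hconst : 2 / γ * (2 : ℝ) ^ (2 - γ) = 2 ^ (3 - γ) / γ := by
        rw [show (3 : ℝ) - γ = 1 + (2 - γ) by ring, rpow_add two_pos, rpow_one]
        ring
      rw [mul_right_comm, ENNReal.ofReal_rpow_of_pos two_pos,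
        ← ENNReal.ofReal_mul (by positivity), hconst]
end

section
/- Let ρ̄, ρ : Ω → [0,∞) be integrable on a measure space Ω with H(ρ̄|ρ) := (1/2)(ρ̄³ - ρ³ + 3(ρ-ρ̄)ρ²). Then ∫_Ω |ρ̄ - ρ|³ dx ≤ 6 ∫_Ω H(ρ̄|ρ) dx. -/
open MeasureTheory

/-- For nonnegative integrable `ρ̄, ρ` on a measure space,
`∫ |ρ̄ - ρ|³ ≤ 6 ∫ H(ρ̄|ρ)` with `H(ρ̄|ρ) = (1/2)(ρ̄³ - ρ³ + 3(ρ - ρ̄)ρ²)`. -/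
theorem cubic_diff_le_six_relative_entropy {Ω : Type*} [MeasurableSpace Ω] (μ : Measure Ω)
    (ρb ρ : Ω → ℝ) (hρb : ∀ x, 0 ≤ ρb x) (hρ : ∀ x, 0 ≤ ρ x)
    (hib : Integrable ρb μ) (hi : Integrable ρ μ) :
    ∫⁻ x, ENNReal.ofReal (|ρb x - ρ x|^3) ∂μ ≤
      6 * ∫⁻ x, ENNReal.ofReal ((1/2) * (ρb x^3 - ρ x^3 + 3*(ρ x - ρb x)*ρ x^2)) ∂μ := by
  rw [← lintegral_const_mul' 6 _ (by norm_num)]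
  refine lintegral_mono fun x => ?_
  have h6 : (6 : ENNReal) = ENNReal.ofReal 6 := by norm_num
  rw [h6, ← ENNReal.ofReal_mul (by norm_num)]
  apply ENNReal.ofReal_le_ofReal
  have hb := hρb x
  have h := hρ x
  rcases abs_cases (ρb x - ρ x) with ⟨he, _⟩ | ⟨he, _⟩ <;> rw [he] <;> nlinarith [sq_nonneg (ρb x - ρ x), mul_nonneg h (sq_nonneg (ρb x - ρ x))]
end

section
/- Let ρ > 0, u ∈ ℝ^d, and M_{ρ,u}(v) = indicator of {|u-v|^d ≤ c_d ρ} with c_d = d/|S_{d-1}|. Then for every measurable f : ℝ^d → [0,∞) with ∫ f dv = ρ, ∫ v f dv = ρu, and ∫|v|² f dv < ∞, and 0 ≤ f ≤ 1, the kinetic energy minimization principle holds: ∫ (|v|²/2) M_{ρ,u}(v) dv ≤ ∫ (|v|²/2) f(v) dv. -/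
/-! Take `r` with `r ^ d = c ρ`, so that the Maxwellian is the indicator of `B = closedBall u r`,
a ball of volume `ρ` and barycentre `u`. Then `f` and `𝟙_B` have the same mass and momentum, so
their kinetic energies differ by `½ ∫ ‖v - u‖² (f - 𝟙_B) = ½ ∫ (‖v - u‖² - r²) (f - 𝟙_B)`, and
the last integrand is pointwise nonnegative: `f - 𝟙_B ≤ 0` on `B`, where `‖v - u‖ ≤ r`, and
`f - 𝟙_B ≥ 0` outside it. -/

open MeasureTheory Real

/-- The Maxwellian of the BGK-alignment model: the indicator of `{v : ‖u - v‖^d ≤ c ρ}`. -/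
noncomputable def bgkMaxwellian (d : ℕ) (c ρ : ℝ) (u v : EuclideanSpace ℝ (Fin d)) : ℝ :=
  if ‖u - v‖ ^ d ≤ c * ρ then 1 else 0

open Metric Set
open scoped ENNReal RealInnerProductSpace

section Bathtub

variable {α E : Type*} [MeasurableSpace α] {μ : Measure α} {s : Set α}
  [NormedAddCommGroup E] [NormedSpace ℝ E]

omit [MeasurableSpace α] in
theorem indicator_one_smul_eq_indicator (s : Set α) (g : α → E) :
    (fun x => s.indicator (1 : α → ℝ) x • g x) = s.indicator g := by
  simp_rw [← indicator_smul_apply_left, Pi.one_apply, one_smul]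

theorem MeasureTheory.IntegrableOn.integrable_indicator_one_smul {g : α → E}
    (hg : IntegrableOn g s μ) (hs : MeasurableSet s) :
    Integrable (fun x => s.indicator (1 : α → ℝ) x • g x) μ := by
  rw [indicator_one_smul_eq_indicator]
  exact hg.integrable_indicator hs

theorem MeasureTheory.IntegrableOn.integrable_mul_indicator_one {φ : α → ℝ}
    (hφ : IntegrableOn φ s μ) (hs : MeasurableSet s) :
    Integrable (fun x => φ x * s.indicator 1 x) μ := by
  simpa only [smul_eq_mul, mul_comm] using IntegrableOn.integrable_indicator_one_smul hφ hs

theorem integral_indicator_one_smul (hs : MeasurableSet s) (g : α → E) :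
    ∫ x, s.indicator (1 : α → ℝ) x • g x ∂μ = ∫ x in s, g x ∂μ := by
  rw [indicator_one_smul_eq_indicator, integral_indicator hs]

theorem integral_mul_indicator_one_le_integral_mul {φ f : α → ℝ} {t : ℝ}
    (hs : MeasurableSet s) (hμs : μ s ≠ ∞) (hφs : IntegrableOn φ s μ)
    (hf : Integrable f μ) (hφf : Integrable (fun x => φ x * f x) μ)
    (hf0 : ∀ x, 0 ≤ f x) (hf1 : ∀ x, f x ≤ 1) (hmass : ∫ x, f x ∂μ = μ.real s)
    (hin : ∀ x ∈ s, φ x ≤ t) (hout : ∀ x ∉ s, t ≤ φ x) :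
    ∫ x, φ x * s.indicator 1 x ∂μ ≤ ∫ x, φ x * f x ∂μ := by
  have hM : Integrable (s.indicator 1) μ :=
    (integrableOn_const hμs (C := (1 : ℝ))).integrable_indicator hs
  have hφM := hφs.integrable_mul_indicator_one hs
  have hsign : ∀ x, 0 ≤ (φ x - t) * (f x - s.indicator 1 x) := fun x => by
    by_cases hx : x ∈ s
    · rw [indicator_of_mem hx, Pi.one_apply]
      exact mul_nonneg_of_nonpos_of_nonpos (sub_nonpos.2 (hin x hx)) (sub_nonpos.2 (hf1 x))
    · rw [indicator_of_notMem hx, sub_zero]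
      exact mul_nonneg (sub_nonneg.2 (hout x hx)) (hf0 x)
  have hexpand : ∫ x, (φ x - t) * (f x - s.indicator 1 x) ∂μ
      = ∫ x, φ x * f x ∂μ - ∫ x, φ x * s.indicator 1 x ∂μ
        - t * (∫ x, f x ∂μ - ∫ x, s.indicator 1 x ∂μ) := by
    have hpt : ∀ x, (φ x - t) * (f x - s.indicator 1 x)
        = (φ x * f x - φ x * s.indicator 1 x) - t * (f x - s.indicator 1 x) := fun x => by ring
    have hφfM : Integrable (fun x => φ x * f x - φ x * s.indicator 1 x) μ := hφf.sub hφM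
    have hfM : Integrable (fun x => t * (f x - s.indicator 1 x)) μ := (hf.sub hM).const_mul t
    simp_rw [hpt]
    rw [integral_sub hφfM hfM, integral_sub hφf hφM,
      integral_const_mul, integral_sub hf hM]
  have hnonneg : 0 ≤ ∫ x, (φ x - t) * (f x - s.indicator 1 x) ∂μ := integral_nonneg hsign
  rw [hexpand, hmass, integral_indicator_one hs, sub_self, mul_zero, sub_zero] at hnonneg
  linarith

end Bathtub

section SecondMoment

variable {E : Type*} [NormedAddCommGroup E] [InnerProductSpace ℝ E] [MeasurableSpace E]
  {μ : Measure E} {h : E → ℝ}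

omit [MeasurableSpace E] in
theorem norm_sub_sq_mul_eq (u v : E) (a : ℝ) :
    ‖v - u‖ ^ 2 * a = ‖v‖ ^ 2 * a - 2 * ⟪u, a • v⟫ + ‖u‖ ^ 2 * a := by
  rw [norm_sub_sq_real, real_inner_smul_right, real_inner_comm]
  ring

theorem integrable_norm_sub_sq_mul (u : E) (hh : Integrable h μ)
    (hhv : Integrable (fun v => h v • v) μ) (hhk : Integrable (fun v => ‖v‖ ^ 2 * h v) μ) :
    Integrable (fun v => ‖v - u‖ ^ 2 * h v) μ := by
  simp_rw [norm_sub_sq_mul_eq u]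
  exact (hhk.sub ((hhv.const_inner u).const_mul 2)).add (hh.const_mul _)

theorem integral_norm_sub_sq_mul [CompleteSpace E] (u : E) (hh : Integrable h μ)
    (hhv : Integrable (fun v => h v • v) μ) (hhk : Integrable (fun v => ‖v‖ ^ 2 * h v) μ) :
    ∫ v, ‖v - u‖ ^ 2 * h v ∂μ
      = ∫ v, ‖v‖ ^ 2 * h v ∂μ - 2 * ⟪u, ∫ v, h v • v ∂μ⟫ + ‖u‖ ^ 2 * ∫ v, h v ∂μ := by
  have hinner : Integrable (fun v => 2 * ⟪u, h v • v⟫) μ := (hhv.const_inner u).const_mul 2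
  simp_rw [norm_sub_sq_mul_eq u]
  rw [integral_add (f := fun v => ‖v‖ ^ 2 * h v - 2 * ⟪u, h v • v⟫) (hhk.sub hinner)
      (hh.const_mul _), integral_sub hhk hinner,
    integral_const_mul, integral_const_mul, integral_inner hhv]

end SecondMoment

section ClosedBall

variable {E : Type*} [NormedAddCommGroup E] [NormedSpace ℝ E] [MeasurableSpace E] [BorelSpace E]
  [ProperSpace E] (μ : Measure E) [IsFiniteMeasureOnCompacts μ] [μ.IsAddLeftInvariant]
  [μ.IsNegInvariant]

-- The reflection `v ↦ 2u - v` preserves `μ` and the ball.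
theorem setIntegral_closedBall_id (u : E) (r : ℝ) :
    ∫ v in closedBall u r, v ∂μ = μ.real (closedBall u r) • u := by
  have hB : MeasurableSet (closedBall u r) := measurableSet_closedBall
  have hrefl : ∀ v, (u + u) - v ∈ closedBall u r ↔ v ∈ closedBall u r := fun v => by
    rw [mem_closedBall, mem_closedBall, dist_eq_norm, dist_eq_norm, ← norm_neg]
    congr! 2
    abel
  have hid : IntegrableOn (fun v : E => v) (closedBall u r) μ :=
    continuous_id.continuousOn.integrableOn_compact (isCompact_closedBall u r)
  have hsymm : ∫ v in closedBall u r, v ∂μ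
      = μ.real (closedBall u r) • (u + u) - ∫ v in closedBall u r, v ∂μ := by
    calc ∫ v in closedBall u r, v ∂μ
        = ∫ v, (closedBall u r).indicator id ((u + u) - v) ∂μ := by
          rw [integral_sub_left_eq_self _ μ, integral_indicator hB]; rfl
      _ = ∫ v in closedBall u r, ((u + u) - v) ∂μ := by
          rw [← integral_indicator hB]
          congr 1 with v
          classical
          simp only [indicator_apply, hrefl, id]
      _ = _ := by
          have hconst : IntegrableOn (fun _ => u + u) (closedBall u r) μ :=
            integrableOn_const measure_closedBall_lt_top.ne
          rw [integral_sub hconst hid, setIntegral_const]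
  linear_combination (norm := module) (1 / 2 : ℝ) • hsymm

end ClosedBall

section KineticEnergy

variable {E : Type*} [NormedAddCommGroup E] [InnerProductSpace ℝ E] [MeasurableSpace E]
  [BorelSpace E] [ProperSpace E] {μ : Measure E} [IsFiniteMeasureOnCompacts μ]
  [μ.IsAddLeftInvariant] [μ.IsNegInvariant]

theorem integral_norm_sq_mul_indicator_closedBall_le {u : E} {r : ℝ} (hr : 0 ≤ r) {f : E → ℝ}
    (hf0 : ∀ v, 0 ≤ f v) (hf1 : ∀ v, f v ≤ 1) (hfi : Integrable f μ)
    (hmomi : Integrable (fun v => f v • v) μ) (hke : Integrable (fun v => ‖v‖ ^ 2 * f v) μ)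
    (hmass : ∫ v, f v ∂μ = μ.real (closedBall u r))
    (hmom : ∫ v, f v • v ∂μ = μ.real (closedBall u r) • u) :
    ∫ v, ‖v‖ ^ 2 * (closedBall u r).indicator 1 v ∂μ ≤ ∫ v, ‖v‖ ^ 2 * f v ∂μ := by
  set B := closedBall u r
  have hB : MeasurableSet B := measurableSet_closedBall
  have hμB : μ B ≠ ∞ := measure_closedBall_lt_top.ne
  have hK : IsCompact B := isCompact_closedBall u r
  have hcont {g : E → ℝ} (hg : Continuous g) : IntegrableOn g B μ :=
    hg.continuousOn.integrableOn_compact hK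
  have hMi : Integrable (B.indicator 1) μ :=
    (integrableOn_const hμB (C := (1 : ℝ))).integrable_indicator hB
  have hMv : Integrable (fun v => B.indicator (1 : E → ℝ) v • v) μ :=
    (continuous_id.continuousOn.integrableOn_compact hK).integrable_indicator_one_smul hB
  have hMk : Integrable (fun v => ‖v‖ ^ 2 * B.indicator 1 v) μ :=
    (hcont (by fun_prop)).integrable_mul_indicator_one hB
  have hMmom : ∫ v, B.indicator (1 : E → ℝ) v • v ∂μ = μ.real B • u := by
    rw [integral_indicator_one_smul hB, setIntegral_closedBall_id]
  have hbath : ∫ v, ‖v - u‖ ^ 2 * B.indicator 1 v ∂μ ≤ ∫ v, ‖v - u‖ ^ 2 * f v ∂μ :=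
    integral_mul_indicator_one_le_integral_mul hB hμB (hcont (by fun_prop)) hfi
      (integrable_norm_sub_sq_mul u hfi hmomi hke) hf0 hf1 hmass (t := r ^ 2)
      (fun v hv => pow_le_pow_left₀ (norm_nonneg _) (mem_closedBall_iff_norm.1 hv) 2)
      (fun v hv => pow_le_pow_left₀ hr (not_le.1 (mt mem_closedBall_iff_norm.2 hv)).le 2)
  rw [integral_norm_sub_sq_mul u hMi hMv hMk, integral_norm_sub_sq_mul u hfi hmomi hke, hmom,
    hMmom, hmass, integral_indicator_one hB] at hbath
  linarith

end KineticEnergy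

theorem bgkMaxwellian_eq_indicator_closedBall {d : ℕ} (hd : d ≠ 0) {c ρ r : ℝ} (hr : 0 ≤ r)
    (hrd : r ^ d = c * ρ) (u : EuclideanSpace ℝ (Fin d)) :
    bgkMaxwellian d c ρ u = (closedBall u r).indicator 1 := by
  funext v
  classical
  simp only [bgkMaxwellian, indicator_apply, mem_closedBall, dist_comm v u, dist_eq_norm, ← hrd,
    pow_le_pow_iff_left₀ (norm_nonneg _) hr hd, Pi.one_apply]

theorem bgkMaxwellian_minimizes_kinetic_energy_general (d : ℕ) (hd : 1 ≤ d) (ρ : ℝ)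
    (u : EuclideanSpace ℝ (Fin d)) (S c : ℝ)
    (hS : S = d * (volume (Metric.ball (0 : EuclideanSpace ℝ (Fin d)) 1)).toReal)
    (hc : c = d / S)
    (f : EuclideanSpace ℝ (Fin d) → ℝ)
    (hf0 : ∀ v, 0 ≤ f v) (hf1 : ∀ v, f v ≤ 1)
    (hfi : Integrable f volume) (hmass : (∫ v, f v) = ρ)
    (hmomi : Integrable (fun v => f v • v) volume) (hmom : (∫ v, f v • v) = ρ • u)
    (hke : Integrable (fun v => ‖v‖^2 * f v) volume) :
    (∫ v, (‖v‖^2/2) * bgkMaxwellian d c ρ u v) ≤ ∫ v, (‖v‖^2/2) * f v := by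
  have hρ : 0 ≤ ρ := hmass ▸ integral_nonneg hf0
  have hball : 0 < volume.real (ball (0 : EuclideanSpace ℝ (Fin d)) 1) :=
    ENNReal.toReal_pos (measure_ball_pos volume _ one_pos).ne' measure_ball_lt_top.ne
  have hc0 : 0 ≤ c := by rw [hc, hS]; positivity
  set r := (c * ρ) ^ (d⁻¹ : ℝ)
  have hr : 0 ≤ r := by positivity
  have hrd : r ^ d = c * ρ := rpow_inv_natCast_pow (by positivity) (by omega)
  have hvol : volume.real (closedBall u r) = ρ := by
    rw [Measure.addHaar_real_closedBall volume u hr, finrank_euclideanSpace_fin, hrd, hc, hS,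
      ← measureReal_def]
    field_simp
  have hkin := integral_norm_sq_mul_indicator_closedBall_le hr hf0 hf1 hfi hmomi hke
    (by rw [hmass, hvol]) (by rw [hmom, hvol])
  rw [bgkMaxwellian_eq_indicator_closedBall (by omega) hr hrd]
  simp_rw [div_mul_eq_mul_div, integral_div]
  linarith

/-- Kinetic-energy minimization (bathtub) principle: among densities `0 ≤ f ≤ 1` with mass `ρ`
and momentum `ρ u`, the Maxwellian `M_{ρ,u} = 𝟙_{|u-v|^d ≤ c_d ρ}` (with `c_d = d/|S_{d-1}|`)
minimizes the kinetic energy `∫ (|v|²/2) f dv`. -/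
theorem bgkMaxwellian_minimizes_kinetic_energy (d : ℕ) (hd : 1 ≤ d) (ρ : ℝ) (hρ : 0 < ρ)
    (u : EuclideanSpace ℝ (Fin d)) (S c : ℝ)
    (hS : S = d * (volume (Metric.ball (0 : EuclideanSpace ℝ (Fin d)) 1)).toReal)
    (hc : c = d / S)
    (f : EuclideanSpace ℝ (Fin d) → ℝ) (hfm : Measurable f)
    (hf0 : ∀ v, 0 ≤ f v) (hf1 : ∀ v, f v ≤ 1)
    (hfi : Integrable f volume) (hmass : (∫ v, f v) = ρ)
    (hmomi : Integrable (fun v => f v • v) volume) (hmom : (∫ v, f v • v) = ρ • u)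
    (hke : Integrable (fun v => ‖v‖^2 * f v) volume) :
    (∫ v, (‖v‖^2/2) * bgkMaxwellian d c ρ u v) ≤ ∫ v, (‖v‖^2/2) * f v :=
  bgkMaxwellian_minimizes_kinetic_energy_general d hd ρ u S c hS hc f hf0 hf1 hfi hmass hmomi hmom
    hke
end

section
/- Let ρ̄, ρ be nonnegative integrable functions on a measure space Ω with ∫ρ̄ = ∫ρ = 1, γ = 1+2/d, and suppose ρ ∈ L^∞. If ∫H(ρ̄|ρ) ≤ δ and ‖ρ̄-ρ‖_{L^p} ≤ δ for some p ∈ (1,γ) with conjugate exponent p', then ∫_Ω |ρ̄^γ - ρ^γ| dx ≤ (γ-1)δ + γ δ ‖ρ^{γ-1}‖_{L^{p'}}. -/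
/-!
Convexity of `t ↦ t ^ γ` makes `H(a|b)` nonnegative, and by its definition
`a ^ γ - b ^ γ = (γ - 1) H(a|b) + γ (a - b) b ^ (γ - 1)`. The triangle inequality then bounds
`|ρ̄ ^ γ - ρ ^ γ|` by `(γ - 1) H(ρ̄|ρ) + γ |ρ̄ - ρ| ρ ^ (γ - 1)`, and Hölder's inequality controls
the integral of the second term by `‖ρ̄ - ρ‖_p ‖ρ ^ (γ - 1)‖_{p'}`. The last norm is finite
because `(γ - 1) p' ≥ (p - 1) p' = p > 1` and `ρ ∈ L¹ ∩ L^∞`.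
-/

open MeasureTheory Real

/-- The paper's `H(a|b)`: the Bregman divergence of the pressure potential `t ↦ t ^ γ / (γ - 1)`. -/
noncomputable def relInternalEnergy (γ a b : ℝ) : ℝ :=
  1 / (γ - 1) * (a ^ γ - b ^ γ + γ * (b - a) * b ^ (γ - 1))

lemma rpow_add_mul_sub_le_rpow {γ a b : ℝ} (hγ : 1 < γ) (ha : 0 ≤ a) (hb : 0 ≤ b) :
    b ^ γ + γ * b ^ (γ - 1) * (a - b) ≤ a ^ γ := by
  rcases hb.eq_or_lt with rfl | hb
  · rw [zero_rpow (by linarith), zero_rpow (by linarith)]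
    simpa using rpow_nonneg ha γ
  have hbern := one_add_mul_self_le_rpow_one_add (s := (a - b) / b)
    (by rw [le_div_iff₀ hb]; linarith) hγ.le
  rw [show 1 + (a - b) / b = a / b by field_simp; ring, div_rpow ha hb.le,
    le_div_iff₀ (rpow_pos_of_pos hb γ)] at hbern
  calc b ^ γ + γ * b ^ (γ - 1) * (a - b) = (1 + γ * ((a - b) / b)) * b ^ γ := by
        rw [rpow_sub hb, rpow_one]; field_simp
    _ ≤ a ^ γ := hbern

lemma relInternalEnergy_nonneg {γ a b : ℝ} (hγ : 1 < γ) (ha : 0 ≤ a) (hb : 0 ≤ b) :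
    0 ≤ relInternalEnergy γ a b := by
  have := rpow_add_mul_sub_le_rpow hγ ha hb
  unfold relInternalEnergy
  exact mul_nonneg (one_div_pos.2 (by linarith)).le (by nlinarith)

lemma abs_rpow_sub_rpow_le {γ a b : ℝ} (hγ : 1 < γ) (ha : 0 ≤ a) (hb : 0 ≤ b) :
    |a ^ γ - b ^ γ| ≤ (γ - 1) * relInternalEnergy γ a b + γ * |(a - b) * b ^ (γ - 1)| := by
  have hsplit :
      a ^ γ - b ^ γ = (γ - 1) * relInternalEnergy γ a b + γ * ((a - b) * b ^ (γ - 1)) := by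
    unfold relInternalEnergy
    field_simp [show γ - 1 ≠ 0 by linarith]
    ring
  rw [hsplit]
  refine (abs_add_le _ _).trans_eq ?_
  rw [abs_of_nonneg (mul_nonneg (by linarith) (relInternalEnergy_nonneg hγ ha hb)), abs_mul,
    abs_of_pos (by linarith : 0 < γ)]

section

variable {α : Type*} [MeasurableSpace α] {μ : Measure α}

lemma lintegral_ofReal_abs_mul_le_eLpNorm_mul_eLpNorm {p q : ℝ} (hpq : p.HolderConjugate q)
    {f g : α → ℝ} (hf : AEStronglyMeasurable f μ) (hg : AEStronglyMeasurable g μ) :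
    ∫⁻ x, ENNReal.ofReal |f x * g x| ∂μ ≤
      eLpNorm f (ENNReal.ofReal p) μ * eLpNorm g (ENNReal.ofReal q) μ := by
  have := hpq.ennrealOfReal
  simpa [eLpNorm_one_eq_lintegral_enorm, Real.enorm_eq_ofReal_abs] using
    eLpNorm_le_eLpNorm_mul_eLpNorm'_of_norm (r := 1) hf hg (· * ·) 1
      (ae_of_all _ fun x => by simp [norm_mul])

lemma memLp_of_integrable_of_memLp_top {E : Type*} [NormedAddCommGroup E] {f : α → E}
    (hf : Integrable f μ) (hf_top : MemLp f ⊤ μ) {s : ℝ} (hs : 1 ≤ s) :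
    MemLp f (ENNReal.ofReal s) μ := by
  have hs0 : ENNReal.ofReal s ≠ 0 := (ENNReal.ofReal_pos.2 (by linarith)).ne'
  rw [← memLp_norm_rpow_iff hf.aestronglyMeasurable hs0 ENNReal.ofReal_ne_top,
    ENNReal.div_self hs0 ENNReal.ofReal_ne_top, ENNReal.toReal_ofReal (by linarith)]
  have hbdd : MemLp (fun x => ‖f x‖ ^ (s - 1)) ⊤ μ := by
    simpa [ENNReal.top_div_of_ne_top, ENNReal.toReal_ofReal (sub_nonneg.2 hs)] using
      hf_top.norm_rpow_div (ENNReal.ofReal (s - 1))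
  convert hbdd.mul' (r := 1) (memLp_one_iff_integrable.2 hf.norm) using 2 with x
  rw [← rpow_one_add' (norm_nonneg _) (by linarith), add_sub_cancel]

lemma MemLp.rpow_of_nonneg {f : α → ℝ} {r q : ℝ} (hf : MemLp f (ENNReal.ofReal (r * q)) μ)
    (hf0 : ∀ x, 0 ≤ f x) (hr : 0 < r) :
    MemLp (fun x => f x ^ r) (ENNReal.ofReal q) μ := by
  have := hf.norm_rpow_div (ENNReal.ofReal r)
  rw [← ENNReal.ofReal_div_of_pos hr, mul_div_cancel_left₀ _ hr.ne',
    ENNReal.toReal_ofReal hr.le] at this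
  simpa [Real.norm_eq_abs, abs_of_nonneg (hf0 _)] using this

lemma lintegral_abs_rpow_sub_rpow_le {γ p q : ℝ} (hγ : 1 < γ) (hpq : p.HolderConjugate q)
    {f g : α → ℝ} (hf0 : ∀ x, 0 ≤ f x) (hg0 : ∀ x, 0 ≤ g x)
    (hf : AEMeasurable f μ) (hg : AEMeasurable g μ) :
    ∫⁻ x, ENNReal.ofReal |f x ^ γ - g x ^ γ| ∂μ ≤
      ENNReal.ofReal (γ - 1) * ∫⁻ x, ENNReal.ofReal (relInternalEnergy γ (f x) (g x)) ∂μ +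
        ENNReal.ofReal γ * (eLpNorm (fun x => f x - g x) (ENNReal.ofReal p) μ *
          eLpNorm (fun x => g x ^ (γ - 1)) (ENNReal.ofReal q) μ) := by
  calc ∫⁻ x, ENNReal.ofReal |f x ^ γ - g x ^ γ| ∂μ
      ≤ ∫⁻ x, (ENNReal.ofReal (γ - 1) * ENNReal.ofReal (relInternalEnergy γ (f x) (g x)) +
          ENNReal.ofReal γ * ENNReal.ofReal |(f x - g x) * g x ^ (γ - 1)|) ∂μ := by
        refine lintegral_mono fun x => ?_
        have hH := relInternalEnergy_nonneg hγ (hf0 x) (hg0 x)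
        rw [← ENNReal.ofReal_mul (by linarith), ← ENNReal.ofReal_mul (by linarith),
          ← ENNReal.ofReal_add (mul_nonneg (by linarith) hH)
            (mul_nonneg (by linarith) (abs_nonneg _))]
        exact ENNReal.ofReal_le_ofReal (abs_rpow_sub_rpow_le hγ (hf0 x) (hg0 x))
    _ = ENNReal.ofReal (γ - 1) * ∫⁻ x, ENNReal.ofReal (relInternalEnergy γ (f x) (g x)) ∂μ +
          ENNReal.ofReal γ * ∫⁻ x, ENNReal.ofReal |(f x - g x) * g x ^ (γ - 1)| ∂μ := by
        rw [lintegral_add_left' (by unfold relInternalEnergy; fun_prop),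
          lintegral_const_mul' _ _ ENNReal.ofReal_ne_top,
          lintegral_const_mul' _ _ ENNReal.ofReal_ne_top]
    _ ≤ _ := by
        gcongr
        exact lintegral_ofReal_abs_mul_le_eLpNorm_mul_eLpNorm hpq
          (hf.sub hg).aestronglyMeasurable (hg.pow_const _).aestronglyMeasurable

end

theorem pressure_difference_bound_general {Ω : Type*} [MeasurableSpace Ω] (μ : Measure Ω)
    (d : ℕ) (hd : 1 ≤ d) (γ : ℝ) (hγ : γ = 1 + 2/(d:ℝ))
    (ρb ρ : Ω → ℝ) (hρb0 : ∀ x, 0 ≤ ρb x) (hρ0 : ∀ x, 0 ≤ ρ x)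
    (hmb : Measurable ρb) (hm : Measurable ρ)
    (hi : Integrable ρ μ)
    (hrinf : MemLp ρ ⊤ μ)
    (δ p p' : ℝ) (hδ : 0 ≤ δ) (hp1 : 1 < p) (hpγ : p < γ) (hp' : 1/p + 1/p' = 1)
    (hH : (∫⁻ x, ENNReal.ofReal
        ((1/(γ-1)) * (ρb x ^ γ - ρ x ^ γ + γ*(ρ x - ρb x)*ρ x ^ (γ-1))) ∂μ) ≤
      ENNReal.ofReal δ)
    (hLp : eLpNorm (fun x => ρb x - ρ x) (ENNReal.ofReal p) μ ≤ ENNReal.ofReal δ) :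
    (∫⁻ x, ENNReal.ofReal |ρb x ^ γ - ρ x ^ γ| ∂μ) ≤
      ENNReal.ofReal ((γ-1)*δ + γ*δ*
        ((eLpNorm (fun x => ρ x ^ (γ-1)) (ENNReal.ofReal p') μ).toReal)) := by
  have hγ1 : 1 < γ := by
    have : (0 : ℝ) < 2 / d := div_pos two_pos (by exact_mod_cast hd)
    rw [hγ]
    linarith
  have hpq : p.HolderConjugate p' :=
    Real.holderConjugate_iff.2 ⟨hp1, by simpa only [one_div] using hp'⟩
  have hN : eLpNorm (fun x => ρ x ^ (γ - 1)) (ENNReal.ofReal p') μ ≠ ⊤ := by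
    have hexp : 1 ≤ (γ - 1) * p' := by
      nlinarith [hpq.sub_one_mul_conj, hpq.symm.pos, hpγ]
    exact (MemLp.rpow_of_nonneg (memLp_of_integrable_of_memLp_top hi hrinf hexp) hρ0
      (by linarith)).eLpNorm_ne_top
  calc _ ≤ _ := lintegral_abs_rpow_sub_rpow_le hγ1 hpq hρb0 hρ0 hmb.aemeasurable hm.aemeasurable
    _ ≤ ENNReal.ofReal (γ - 1) * ENNReal.ofReal δ + ENNReal.ofReal γ * (ENNReal.ofReal δ *
          eLpNorm (fun x => ρ x ^ (γ - 1)) (ENNReal.ofReal p') μ) := by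
        gcongr
        exact hH
    _ = _ := by
        rw [← ENNReal.ofReal_toReal hN, ENNReal.toReal_ofReal ENNReal.toReal_nonneg,
          ENNReal.ofReal_add (by nlinarith) (by positivity), ENNReal.ofReal_mul (by linarith),
          ENNReal.ofReal_mul (by nlinarith), ENNReal.ofReal_mul (by linarith), mul_assoc]

/-- Convergence of the pressure term: if `∫ H(ρ̄|ρ) ≤ δ` and `‖ρ̄-ρ‖_{L^p} ≤ δ` with
`p ∈ (1,γ)`, `γ = 1 + 2/d`, `1/p + 1/p' = 1`, then
`∫ |ρ̄^γ - ρ^γ| ≤ (γ-1)δ + γ δ ‖ρ^{γ-1}‖_{L^{p'}}`. -/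
theorem pressure_difference_bound {Ω : Type*} [MeasurableSpace Ω] (μ : Measure Ω)
    (d : ℕ) (hd : 1 ≤ d) (γ : ℝ) (hγ : γ = 1 + 2/(d:ℝ))
    (ρb ρ : Ω → ℝ) (hρb0 : ∀ x, 0 ≤ ρb x) (hρ0 : ∀ x, 0 ≤ ρ x)
    (hmb : Measurable ρb) (hm : Measurable ρ)
    (hib : Integrable ρb μ) (hi : Integrable ρ μ)
    (h1b : (∫ x, ρb x ∂μ) = 1) (h1 : (∫ x, ρ x ∂μ) = 1)
    (hrinf : MemLp ρ ⊤ μ)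
    (δ p p' : ℝ) (hδ : 0 ≤ δ) (hp1 : 1 < p) (hpγ : p < γ) (hp' : 1/p + 1/p' = 1)
    (hH : (∫⁻ x, ENNReal.ofReal
        ((1/(γ-1)) * (ρb x ^ γ - ρ x ^ γ + γ*(ρ x - ρb x)*ρ x ^ (γ-1))) ∂μ) ≤
      ENNReal.ofReal δ)
    (hLp : eLpNorm (fun x => ρb x - ρ x) (ENNReal.ofReal p) μ ≤ ENNReal.ofReal δ) :
    (∫⁻ x, ENNReal.ofReal |ρb x ^ γ - ρ x ^ γ| ∂μ) ≤
      ENNReal.ofReal ((γ-1)*δ + γ*δ*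
        ((eLpNorm (fun x => ρ x ^ (γ-1)) (ENNReal.ofReal p') μ).toReal)) :=
  pressure_difference_bound_general μ d hd γ hγ ρb ρ hρb0 hρ0 hmb hm hi hrinf δ p p' hδ hp1 hpγ hp'
    hH hLp
end
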